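/- Let T be a uniform tree, G = Aut(T), Γ ⊂ G a torsion-free uniform lattice, Y = Γ\T, and π : T → Y the canonical projection. The group Γ acts on the set of covering maps T → Y by precomposition (via its action on T). Then the bijection Γg ↦ π∘g between Γ\G and covering maps T → Y restricts, for every n ≥ 1, to a bijection between Γ\Comm_n(Γ, G) and the set of covering maps T → Y whose Γ-orbit has size exactly n. -/

import Mathlib

/-!
A tree is simply connected: lifting walks through a covering is well defined on a tree, because
every closed walk in a tree cancels down to the empty walk by removing backtracks. So morphisms
from a tree lift through coverings, uniquely once one vertex is fixed. Since `Γ` acts freely,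
`π : T → Γ\T` is a covering, hence universal: every covering `T → Γ\T` is `π ∘ g` with
`g ∈ Aut T`, and `π ∘ a = π ∘ b` iff `b a⁻¹ ∈ Γ`. Letting `γ` act by `f ↦ f ∘ γ⁻¹`, the stabilizer
of `π ∘ g` is `Γ ∩ Γ^g`, so by orbit–stabilizer its orbit has `[Γ : Γ ∩ Γ^g]` elements. When this
index is finite, `Γ ∩ Γ^g` has finitely many orbits on vertices, and since `Γ^g` acts freely its
cosets modulo `Γ ∩ Γ^g` inject into these orbits, so `[Γ^g : Γ ∩ Γ^g]` is finite too.
-/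

section CommensurizerDefs

variable {G : Type*} [Group G]

/-- The conjugate subgroup `A ^ g = g⁻¹ A g`. -/
def conjSubgroup (g : G) (A : Subgroup G) : Subgroup G :=
  A.map (MulAut.conj g⁻¹).toMonoidHom

/-- `χ_{A,G}(g) = [A : A ∩ A^g]` (`0` if the index is infinite). -/
noncomputable def commIndex (A : Subgroup G) (g : G) : ℕ :=
  (conjSubgroup g A).relIndex A

/-- `Comm_n(A, G) = {g : [A : A ∩ A^g] = n and [A^g : A ∩ A^g] < ∞}`. -/
def commSet (A : Subgroup G) (n : ℕ) : Set G :=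
  {g : G | ((conjSubgroup g A).relIndex A ≠ 0 ∧ A.relIndex (conjSubgroup g A) ≠ 0) ∧
    commIndex A g = n}

end CommensurizerDefs

/-- A graph in the sense of Serre: a vertex set `V`, a set `E` of oriented edges with
initial-vertex map `init` and a fixed-point-free involution `bar` (orientation
reversal). This allows loops and multiple edges, as needed for quotient graphs. -/
structure SGraph : Type 1 where
  V : Type
  E : Type
  init : E → V
  bar : E → E
  bar_invol : ∀ e, bar (bar e) = e
  bar_ne : ∀ e, bar e ≠ e

namespace SGraph

/-- The terminal vertex of an oriented edge. -/
def term (X : SGraph) (e : X.E) : X.V := X.init (X.bar e)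

/-- The star of a vertex: the set of oriented edges starting at it. -/
def star (X : SGraph) (v : X.V) : Set X.E := {e : X.E | X.init e = v}

/-- A morphism of graphs. -/
@[ext] structure Hom (X Y : SGraph) where
  fV : X.V → Y.V
  fE : X.E → Y.E
  init_comm : ∀ e, Y.init (fE e) = fV (X.init e)
  bar_comm : ∀ e, Y.bar (fE e) = fE (X.bar e)

/-- The identity morphism. -/
def Hom.id (X : SGraph) : Hom X X :=
  ⟨fun v => v, fun e => e, fun _ => rfl, fun _ => rfl⟩

/-- Composition of graph morphisms. -/
def Hom.comp {X Y Z : SGraph} (f : Hom Y Z) (g : Hom X Y) : Hom X Z :=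
  ⟨f.fV ∘ g.fV, f.fE ∘ g.fE,
    fun e => by simp [Function.comp, f.init_comm, g.init_comm],
    fun e => by simp [Function.comp, f.bar_comm, g.bar_comm]⟩

theorem Hom.comp_assoc {W X Y Z : SGraph} (f : Hom Y Z) (g : Hom X Y) (h : Hom W X) :
    (f.comp g).comp h = f.comp (g.comp h) := rfl

theorem Hom.comp_id {X Y : SGraph} (f : Hom X Y) : f.comp (Hom.id X) = f := rfl

theorem Hom.id_comp {X Y : SGraph} (f : Hom X Y) : (Hom.id Y).comp f = f := rfl

/-- A graph morphism is a covering map if it is a local bijection, i.e. restricts to a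
bijection from the star of each vertex onto the star of its image. -/
def Hom.IsCovering {X Y : SGraph} (f : Hom X Y) : Prop :=
  ∀ v : X.V, Set.BijOn f.fE (X.star v) (Y.star (f.fV v))

/-- An automorphism of a graph. -/
@[ext] structure Aut (X : SGraph) where
  toHom : Hom X X
  invHom : Hom X X
  left_inv : toHom.comp invHom = Hom.id X
  right_inv : invHom.comp toHom = Hom.id X

namespace Aut

variable {X : SGraph}

instance : Mul (Aut X) :=
  ⟨fun a b =>
    ⟨a.toHom.comp b.toHom, b.invHom.comp a.invHom, by
      rw [Hom.comp_assoc, ← Hom.comp_assoc b.toHom, b.left_inv, Hom.id_comp, a.left_inv], by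
      rw [Hom.comp_assoc, ← Hom.comp_assoc a.invHom, a.right_inv, Hom.id_comp, b.right_inv]⟩⟩

instance : One (Aut X) := ⟨⟨Hom.id X, Hom.id X, rfl, rfl⟩⟩

instance : Inv (Aut X) := ⟨fun a => ⟨a.invHom, a.toHom, a.right_inv, a.left_inv⟩⟩

@[simp] theorem mul_toHom (a b : Aut X) : (a * b).toHom = a.toHom.comp b.toHom := rfl
@[simp] theorem mul_invHom (a b : Aut X) : (a * b).invHom = b.invHom.comp a.invHom := rfl
@[simp] theorem one_toHom : (1 : Aut X).toHom = Hom.id X := rfl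
@[simp] theorem one_invHom : (1 : Aut X).invHom = Hom.id X := rfl
@[simp] theorem inv_toHom (a : Aut X) : a⁻¹.toHom = a.invHom := rfl
@[simp] theorem inv_invHom (a : Aut X) : a⁻¹.invHom = a.toHom := rfl

instance : Group (Aut X) where
  mul_assoc a b c := rfl
  one_mul a := rfl
  mul_one a := rfl
  inv_mul_cancel a := by
    refine Aut.ext ?_ ?_
    · simpa using a.right_inv
    · simpa using a.right_inv

/-- Automorphisms act on the vertices of a graph. -/
instance : MulAction (Aut X) X.V where
  smul a v := a.toHom.fV v
  one_smul v := rfl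
  mul_smul a b v := rfl

/-- Automorphisms act on the edges of a graph. -/
instance : MulAction (Aut X) X.E where
  smul a e := a.toHom.fE e
  one_smul e := rfl
  mul_smul a b e := rfl

@[simp] theorem smul_V_def (a : Aut X) (v : X.V) : a • v = a.toHom.fV v := rfl
@[simp] theorem smul_E_def (a : Aut X) (e : X.E) : a • e = a.toHom.fE e := rfl

end Aut

/-- A graph is connected if any two vertices are joined by an edge path. -/
def Connected (X : SGraph) : Prop :=
  ∀ u v : X.V,
    Relation.ReflTransGen (fun x y : X.V => ∃ e : X.E, X.init e = x ∧ X.term e = y) u v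

/-- A graph is a tree if it is nonempty, connected, and has no reduced closed edge path
of positive length. -/
def IsTreeS (X : SGraph) : Prop :=
  Nonempty X.V ∧ Connected X ∧
    ∀ (n : ℕ) (c : Fin (n + 1) → X.E),
      (∀ i : Fin n, X.init (c i.succ) = X.term (c i.castSucc)) →
      (∀ i : Fin n, c i.succ ≠ X.bar (c i.castSucc)) →
      X.term (c (Fin.last n)) ≠ X.init (c 0)

/-- A graph is locally finite if all its stars are finite, and finite if it has finitely
many vertices and edges. -/
def LocallyFiniteS (X : SGraph) : Prop := ∀ v : X.V, (X.star v).Finite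

variable (X : SGraph) (Γ : Subgroup (Aut X))

/-- The quotient graph `Γ\X` of a graph `X` by a subgroup `Γ ≤ Aut(X)` acting without
inversions (`hni`): vertices are `Γ`-orbits of vertices, edges are `Γ`-orbits of
oriented edges. -/
def quotSG (hni : ∀ (γ : ↥Γ) (e : X.E), (γ : Aut X) • e ≠ X.bar e) : SGraph where
  V := Quotient (MulAction.orbitRel ↥Γ X.V)
  E := Quotient (MulAction.orbitRel ↥Γ X.E)
  init := Quotient.lift (fun e => (⟦X.init e⟧ : Quotient (MulAction.orbitRel ↥Γ X.V)))
    (by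
      rintro e e' ⟨γ, rfl⟩
      exact Quotient.sound ⟨γ, ((γ : Aut X).toHom.init_comm e').symm⟩)
  bar := Quotient.lift (fun e => (⟦X.bar e⟧ : Quotient (MulAction.orbitRel ↥Γ X.E)))
    (by
      rintro e e' ⟨γ, rfl⟩
      refine Quotient.sound ⟨γ, ?_⟩
      exact ((γ : Aut X).toHom.bar_comm e').symm)
  bar_invol := by
    rintro ⟨e⟩
    exact congrArg (Quotient.mk _) (X.bar_invol e)
  bar_ne := by
    rintro ⟨e⟩ h
    obtain ⟨γ, hγ⟩ := Quotient.exact h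
    exact hni γ e hγ

/-- The canonical projection `X → Γ\X`. -/
def quotHom (hni : ∀ (γ : ↥Γ) (e : X.E), (γ : Aut X) • e ≠ X.bar e) :
    Hom X (quotSG X Γ hni) :=
  ⟨fun v => ⟦v⟧, fun e => ⟦e⟧, fun _ => rfl, fun _ => rfl⟩

end SGraph

section Commensurability

open MulAction

variable {G α : Type*} [Group G] [MulAction G α]

theorem mem_conjSubgroup {g x : G} {A : Subgroup G} :
    x ∈ conjSubgroup g A ↔ g * x * g⁻¹ ∈ A := by
  rw [conjSubgroup, Subgroup.mem_map_equiv, MulAut.conj_symm_apply, inv_inv]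

instance isCancelSMul_conjSubgroup (Γ : Subgroup G) [IsCancelSMul Γ α] (g : G) :
    IsCancelSMul (conjSubgroup g Γ) α := by
  refine isCancelSMul_iff_eq_one_of_smul_eq.mpr fun k a hk => ?_
  have hfix : (⟨g * k * g⁻¹, mem_conjSubgroup.mp k.2⟩ : Γ) • (g • a) = g • a := by
    change (g * k * g⁻¹) • g • a = g • a
    rw [smul_smul, inv_mul_cancel_right, mul_smul]
    exact congrArg (g • ·) hk
  have hconj : g * k * g⁻¹ = 1 := congrArg Subtype.val (IsCancelSMul.eq_one_of_smul hfix)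
  exact Subtype.ext (mul_eq_left.mp (mul_inv_eq_one.mp hconj))

theorem Subgroup.index_ne_zero_of_finite_orbitRel_quotient [IsCancelSMul G α] [Nonempty α]
    (H : Subgroup G) [Finite (orbitRel.Quotient H α)] : H.index ≠ 0 := by
  obtain ⟨a⟩ := ‹Nonempty α›
  let φ : G ⧸ H → orbitRel.Quotient H α :=
    Quotient.map' (fun g => g⁻¹ • a) fun g g' hg => by
      refine ⟨⟨g⁻¹ * g', QuotientGroup.leftRel_apply.mp hg⟩, ?_⟩
      change (g⁻¹ * g') • g'⁻¹ • a = g⁻¹ • a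
      rw [smul_smul, mul_inv_cancel_right]
  have hφ : Function.Injective φ := by
    rintro ⟨g⟩ ⟨g'⟩ hgg'
    obtain ⟨h, hh⟩ := Quotient.exact hgg'
    change (h : G) • g'⁻¹ • a = g⁻¹ • a at hh
    have hfix : (g * h * g'⁻¹) • a = a := by
      rw [mul_smul, mul_smul, hh, smul_inv_smul]
    have h1 : g⁻¹ * g' = h :=
      inv_mul_eq_iff_eq_mul.mpr (mul_inv_eq_one.mp (IsCancelSMul.eq_one_of_smul hfix)).symm
    exact Quotient.sound' (QuotientGroup.leftRel_apply.mpr (h1 ▸ h.2))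
  have := Finite.of_injective φ hφ
  exact Subgroup.index_ne_zero_of_finite

theorem Subgroup.relIndex_ne_zero_of_finite_orbitRel_quotient [Nonempty α] {Γ K : Subgroup G}
    [IsCancelSMul K α] [Finite (orbitRel.Quotient Γ α)] (h : K.relIndex Γ ≠ 0) :
    Γ.relIndex K ≠ 0 := by
  have hΓ : Finite (orbitRel.Quotient (K.subgroupOf Γ) α) :=
    Subgroup.finite_quotient_of_finite_quotient_of_index_ne_zero h
  have hK : Finite (orbitRel.Quotient (Γ.subgroupOf K) α) := by
    unfold orbitRel.Quotient at hΓ ⊢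
    rwa [orbitRel_subgroupOf, inf_comm, ← orbitRel_subgroupOf] at hΓ
  exact (Γ.subgroupOf K).index_ne_zero_of_finite_orbitRel_quotient (α := α)

theorem mem_commSet_iff_of_finite_orbitRel_quotient [Nonempty α] {Γ : Subgroup G}
    [IsCancelSMul Γ α] [Finite (orbitRel.Quotient Γ α)] {n : ℕ} (hn : n ≠ 0) (g : G) :
    g ∈ commSet Γ n ↔ (conjSubgroup g Γ).relIndex Γ = n :=
  ⟨fun h => h.2, fun h =>
    ⟨⟨h ▸ hn, Subgroup.relIndex_ne_zero_of_finite_orbitRel_quotient (α := α) (h ▸ hn)⟩, h⟩⟩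

end Commensurability

namespace SGraph

variable {X Y W : SGraph}

theorem term_bar (e : X.E) : X.term (X.bar e) = X.init e :=
  congrArg X.init (X.bar_invol e)

theorem Hom.term_comm (f : Hom X Y) (e : X.E) : Y.term (f.fE e) = f.fV (X.term e) := by
  rw [term, f.bar_comm, f.init_comm, term]

theorem Aut.toHom_injective : Function.Injective (Aut.toHom : Aut X → Hom X X) := by
  intro a b h
  refine Aut.ext h ?_
  calc a.invHom = a.invHom.comp (b.toHom.comp b.invHom) := by rw [b.left_inv, Hom.comp_id]
    _ = b.invHom := by rw [← h, ← Hom.comp_assoc, a.right_inv, Hom.id_comp]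

theorem Aut.init_smul (a : Aut X) (e : X.E) : X.init (a • e) = a • X.init e :=
  a.toHom.init_comm e

def IsWalk (X : SGraph) : X.V → List X.E → X.V → Prop
  | u, [], v => u = v
  | u, e :: l, v => X.init e = u ∧ X.IsWalk (X.term e) l v

def reverseWalk (X : SGraph) (l : List X.E) : List X.E := (l.map X.bar).reverse

namespace IsWalk

variable {u v w : X.V} {l l₁ l₂ : List X.E}

theorem append (h₁ : X.IsWalk u l₁ v) (h₂ : X.IsWalk v l₂ w) : X.IsWalk u (l₁ ++ l₂) w := by
  induction l₁ generalizing u with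
  | nil => exact (h₁ : u = v) ▸ h₂
  | cons e l ih => exact ⟨h₁.1, ih h₁.2⟩

theorem of_append (h : X.IsWalk u (l₁ ++ l₂) w) : ∃ v, X.IsWalk u l₁ v ∧ X.IsWalk v l₂ w := by
  induction l₁ generalizing u with
  | nil => exact ⟨u, rfl, h⟩
  | cons e l ih =>
      obtain ⟨v, hv₁, hv₂⟩ := ih h.2
      exact ⟨v, ⟨h.1, hv₁⟩, hv₂⟩

theorem map (f : Hom X Y) (h : X.IsWalk u l v) : Y.IsWalk (f.fV u) (l.map f.fE) (f.fV v) := by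
  induction l generalizing u with
  | nil => exact congrArg f.fV h
  | cons e l ih => exact ⟨by rw [f.init_comm, h.1], f.term_comm e ▸ ih h.2⟩

theorem reverse (h : X.IsWalk u l v) : X.IsWalk v (X.reverseWalk l) u := by
  induction l generalizing u with
  | nil => exact (h : u = v).symm
  | cons e l ih =>
      rw [reverseWalk, List.map_cons, List.reverse_cons]
      exact (ih h.2).append ⟨rfl, (term_bar e).trans h.1⟩

theorem init_getElem_zero (h : X.IsWalk u l v) (hl : 0 < l.length) : X.init l[0] = u := by
  cases l with
  | nil => simp at hl
  | cons e l => exact h.1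

theorem init_getElem_succ (h : X.IsWalk u l v) (i : ℕ) (hi : i + 1 < l.length) :
    X.init l[i + 1] = X.term l[i] := by
  induction l generalizing u i with
  | nil => simp at hi
  | cons e l ih =>
      cases i with
      | zero => exact h.2.init_getElem_zero (by simpa using hi)
      | succ j => exact ih h.2 j (by simpa using hi)

theorem term_getElem_last (h : X.IsWalk u l v) (hl : 0 < l.length) :
    X.term l[l.length - 1] = v := by
  induction l generalizing u with
  | nil => simp at hl
  | cons e l ih =>
      cases l with
      | nil => exact h.2
      | cons e' l' => simpa using ih h.2 (by simp)

end IsWalk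

theorem exists_isWalk (hc : X.Connected) (u v : X.V) : ∃ l, X.IsWalk u l v := by
  induction hc u v with
  | refl => exact ⟨[], rfl⟩
  | tail _ hstep ih =>
      obtain ⟨l, hl⟩ := ih
      obtain ⟨e, he, rfl⟩ := hstep
      exact ⟨l ++ [e], hl.append ⟨he, rfl⟩⟩

theorem reverseWalk_map (f : Hom X Y) (l : List X.E) :
    (X.reverseWalk l).map f.fE = Y.reverseWalk (l.map f.fE) := by
  simp only [reverseWalk, List.map_reverse, List.map_map]
  congr 2
  exact funext fun e => (f.bar_comm e).symm

theorem IsTreeS.exists_backtrack (ht : X.IsTreeS) {x : X.V} {l : List X.E} (hne : l ≠ [])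
    (hw : X.IsWalk x l x) : ∃ e l₁ l₂, l = l₁ ++ e :: X.bar e :: l₂ := by
  obtain ⟨n, hn⟩ : ∃ n, l.length = n + 1 :=
    Nat.exists_eq_succ_of_ne_zero (by simpa using hne)
  by_contra hnone
  refine ht.2.2 n (fun i => l[i.1]) (fun i => hw.init_getElem_succ i.1 (by omega))
    (fun i hbt => hnone ⟨l[i.1], l.take i.1, l.drop (i.1 + 2), ?_⟩) ?_
  · conv_lhs => rw [← List.take_append_drop i.1 l]
    rw [List.drop_eq_getElem_cons (by omega), List.drop_eq_getElem_cons (by omega)]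
    exact congrArg _ (congrArg _ (congrArg (· :: _) hbt))
  · have hlast : X.term l[n] = x := by simpa [hn] using hw.term_getElem_last (by omega)
    simp only [Fin.val_last, Fin.val_zero]
    rw [hlast, hw.init_getElem_zero (by omega)]

open Classical in
/-- Steps that do not lift are skipped; along a covering every step of a walk lifts. -/
noncomputable def Hom.liftEnd (p : Hom W Y) : W.V → List Y.E → W.V
  | w, [] => w
  | w, ε :: l =>
      if h : ∃ e, W.init e = w ∧ p.fE e = ε then p.liftEnd (W.term h.choose) l
      else p.liftEnd w l

theorem Hom.liftEnd_append (p : Hom W Y) (w : W.V) (l₁ l₂ : List Y.E) :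
    p.liftEnd w (l₁ ++ l₂) = p.liftEnd (p.liftEnd w l₁) l₂ := by
  induction l₁ generalizing w with
  | nil => rfl
  | cons ε l ih =>
      rw [List.cons_append, liftEnd, liftEnd]
      split <;> exact ih _

namespace Hom.IsCovering

variable {p : Hom W Y} (hp : p.IsCovering)
include hp

theorem exists_lift_edge {w : W.V} {ε : Y.E} (h : Y.init ε = p.fV w) :
    ∃ e, W.init e = w ∧ p.fE e = ε :=
  (hp w).surjOn h

theorem lift_edge_unique {e e' : W.E} (h : W.init e = W.init e') (h' : p.fE e = p.fE e') :
    e = e' :=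
  (hp (W.init e')).injOn h rfl h'

theorem liftEnd_cons {w : W.V} {e : W.E} (he : W.init e = w) (l : List Y.E) :
    p.liftEnd w (p.fE e :: l) = p.liftEnd (W.term e) l := by
  have hex : ∃ e', W.init e' = w ∧ p.fE e' = p.fE e := ⟨e, he, rfl⟩
  rw [liftEnd, dif_pos hex,
    hp.lift_edge_unique (hex.choose_spec.1.trans he.symm) hex.choose_spec.2]

theorem fV_liftEnd {l : List Y.E} {w : W.V} {u : Y.V} (h : Y.IsWalk (p.fV w) l u) :
    p.fV (p.liftEnd w l) = u := by
  induction l generalizing w with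
  | nil => exact h
  | cons ε l ih =>
      obtain ⟨e, he, rfl⟩ := hp.exists_lift_edge h.1
      rw [hp.liftEnd_cons he]
      exact ih ((p.term_comm e) ▸ h.2)

theorem liftEnd_cons_cons_bar {w : W.V} {ε : Y.E} (h : Y.init ε = p.fV w) (l : List Y.E) :
    p.liftEnd w (ε :: Y.bar ε :: l) = p.liftEnd w l := by
  obtain ⟨e, he, rfl⟩ := hp.exists_lift_edge h
  rw [hp.liftEnd_cons he, p.bar_comm, hp.liftEnd_cons (w := W.term e) rfl, term_bar, he]

theorem liftEnd_liftEnd_reverseWalk {l : List Y.E} {w : W.V} {u : Y.V}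
    (h : Y.IsWalk (p.fV w) l u) : p.liftEnd (p.liftEnd w l) (Y.reverseWalk l) = w := by
  induction l generalizing w with
  | nil => rfl
  | cons ε l ih =>
      obtain ⟨e, he, rfl⟩ := hp.exists_lift_edge h.1
      rw [hp.liftEnd_cons he, reverseWalk, List.map_cons, List.reverse_cons, liftEnd_append,
        ← reverseWalk, ih ((p.term_comm e) ▸ h.2), p.bar_comm,
        hp.liftEnd_cons (w := W.term e) rfl, term_bar, he]
      rfl

theorem eq_of_comp_eq (hc : X.Connected) {g₁ g₂ : Hom X W} (hcomp : p.comp g₁ = p.comp g₂)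
    {x₀ : X.V} (h₀ : g₁.fV x₀ = g₂.fV x₀) : g₁ = g₂ := by
  have hE : ∀ e, g₁.fV (X.init e) = g₂.fV (X.init e) → g₁.fE e = g₂.fE e := fun e he =>
    hp.lift_edge_unique (by rw [g₁.init_comm, g₂.init_comm, he])
      (congrFun (congrArg Hom.fE hcomp) e)
  have hV : ∀ v, g₁.fV v = g₂.fV v := by
    intro v
    induction hc x₀ v with
    | refl => exact h₀
    | tail _ hstep ih =>
        obtain ⟨e, rfl, rfl⟩ := hstep
        rw [← g₁.term_comm, ← g₂.term_comm, hE e ih]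
  exact Hom.ext (funext hV) (funext fun e => hE e (hV _))

theorem comp {Z : SGraph} {q : Hom Z W} (hq : q.IsCovering) : (p.comp q).IsCovering :=
  fun v => (hp (q.fV v)).comp (hq v)

end Hom.IsCovering

theorem Aut.isCovering_toHom (a : Aut X) : a.toHom.IsCovering := fun v =>
  Set.InvOn.bijOn (f' := ((a⁻¹ • ·) : X.E → X.E))
    ⟨fun e _ => inv_smul_smul a e, fun e _ => smul_inv_smul a e⟩
    (fun e (he : X.init e = v) => show X.init (a • e) = a • v by rw [Aut.init_smul, he])
    (fun e (he : X.init e = a • v) =>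
      show X.init (a⁻¹ • e) = v by rw [Aut.init_smul, he, inv_smul_smul])

section Lifting

open Hom

variable {p : Hom W Y}

theorem IsTreeS.liftEnd_map_of_isWalk_self (ht : X.IsTreeS) (hp : p.IsCovering) (f : Hom X Y)
    {x : X.V} {w : W.V} (hpw : p.fV w = f.fV x) {l : List X.E} (hw : X.IsWalk x l x) :
    p.liftEnd w (l.map f.fE) = w := by
  induction hn : l.length using Nat.strong_induction_on generalizing l with
  | _ n ih =>
  rcases eq_or_ne l [] with rfl | hne
  · rfl
  obtain ⟨e, l₁, l₂, rfl⟩ := ht.exists_backtrack hne hw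
  obtain ⟨a, hw₁, he, -, hw₂⟩ := hw.of_append
  rw [term_bar, he] at hw₂
  have hinit : Y.init (f.fE e) = p.fV (p.liftEnd w (l₁.map f.fE)) := by
    rw [hp.fV_liftEnd (hpw ▸ hw₁.map f), f.init_comm, he]
  calc p.liftEnd w ((l₁ ++ e :: X.bar e :: l₂).map f.fE)
      = p.liftEnd (p.liftEnd w (l₁.map f.fE)) (f.fE e :: Y.bar (f.fE e) :: l₂.map f.fE) := by
        simp only [List.map_append, List.map_cons, liftEnd_append, f.bar_comm]
    _ = p.liftEnd w ((l₁ ++ l₂).map f.fE) := by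
        rw [hp.liftEnd_cons_cons_bar hinit, List.map_append, liftEnd_append]
    _ = w := ih _ (by simp at hn ⊢; omega) (hw₁.append hw₂) rfl

theorem IsTreeS.liftEnd_map_eq (ht : X.IsTreeS) (hp : p.IsCovering) (f : Hom X Y)
    {x v : X.V} {w : W.V} (hpw : p.fV w = f.fV x) {l₁ l₂ : List X.E} (h₁ : X.IsWalk x l₁ v)
    (h₂ : X.IsWalk x l₂ v) : p.liftEnd w (l₁.map f.fE) = p.liftEnd w (l₂.map f.fE) := by
  have hmap : Y.IsWalk (p.fV w) (l₁.map f.fE) (f.fV v) := hpw ▸ h₁.map f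
  have hclosed := ht.liftEnd_map_of_isWalk_self hp f (hp.fV_liftEnd hmap) (h₁.reverse.append h₂)
  rw [List.map_append, liftEnd_append, reverseWalk_map,
    hp.liftEnd_liftEnd_reverseWalk hmap] at hclosed
  exact hclosed.symm

theorem IsTreeS.exists_lift (ht : X.IsTreeS) (hp : p.IsCovering) (f : Hom X Y) {x₀ : X.V}
    {w₀ : W.V} (h₀ : p.fV w₀ = f.fV x₀) : ∃ g : Hom X W, p.comp g = f ∧ g.fV x₀ = w₀ := by
  choose walk hwalk using exists_isWalk ht.2.1 x₀
  set gV : X.V → W.V := fun v => p.liftEnd w₀ ((walk v).map f.fE)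
  have gV_eq : ∀ {v l}, X.IsWalk x₀ l v → gV v = p.liftEnd w₀ (l.map f.fE) := fun hl =>
    ht.liftEnd_map_eq hp f h₀ (hwalk _) hl
  have hpgV : ∀ v, p.fV (gV v) = f.fV v := fun v => hp.fV_liftEnd (h₀ ▸ (hwalk v).map f)
  choose gE hgE_init hgE using fun e : X.E =>
    hp.exists_lift_edge (w := gV (X.init e)) (ε := f.fE e) (by rw [hpgV, f.init_comm])
  have hgE_term : ∀ e, W.term (gE e) = gV (X.term e) := fun e => by
    rw [gV_eq (l := walk (X.init e) ++ [e]) ((hwalk _).append ⟨rfl, rfl⟩), List.map_append,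
      liftEnd_append, List.map_singleton, ← hgE e, hp.liftEnd_cons (hgE_init e)]
    rfl
  refine ⟨⟨gV, gE, hgE_init, fun e => ?_⟩, Hom.ext (funext hpgV) (funext hgE),
    gV_eq (l := []) rfl⟩
  exact hp.lift_edge_unique ((hgE_term e).trans (hgE_init (X.bar e)).symm)
    (by rw [← p.bar_comm, hgE, hgE, f.bar_comm])

theorem IsTreeS.exists_aut_comp_eq (ht : X.IsTreeS) {p f : Hom X Y} (hp : p.IsCovering)
    (hf : f.IsCovering) {x y : X.V} (h : p.fV y = f.fV x) :
    ∃ g : Aut X, p.comp g.toHom = f ∧ g.toHom.fV x = y := by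
  obtain ⟨g, hg, hgx⟩ := ht.exists_lift hp f h
  obtain ⟨g', hg', hg'y⟩ := ht.exists_lift hf p h.symm
  have hgg' : g.comp g' = Hom.id X :=
    hp.eq_of_comp_eq ht.2.1 (x₀ := y) (by rw [← Hom.comp_assoc, hg, hg']; rfl)
      (show g.fV (g'.fV y) = y by rw [hg'y, hgx])
  have hg'g : g'.comp g = Hom.id X :=
    hf.eq_of_comp_eq ht.2.1 (x₀ := x) (by rw [← Hom.comp_assoc, hg', hg]; rfl)
      (show g'.fV (g.fV x) = x by rw [hgx, hg'y])
  exact ⟨⟨g, g', hgg', hg'g⟩, hg, hgx⟩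

end Lifting

theorem Hom.comp_toHom_eq_iff (f : Hom X Y) (a b : Aut X) :
    f.comp a.toHom = f.comp b.toHom ↔ f.comp (b * a⁻¹).toHom = f := by
  constructor
  · intro h
    calc f.comp (b * a⁻¹).toHom = (f.comp a.toHom).comp a⁻¹.toHom := by rw [h]; rfl
      _ = f := by rw [Hom.comp_assoc, ← Aut.mul_toHom, mul_inv_cancel]; rfl
  · intro h
    calc f.comp a.toHom = (f.comp (b * a⁻¹).toHom).comp a.toHom := by rw [h]
      _ = f.comp b.toHom := by rw [Hom.comp_assoc, ← Aut.mul_toHom, inv_mul_cancel_right]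

instance : MulAction (Aut X) (Hom X Y) where
  smul a f := f.comp a⁻¹.toHom
  one_smul _ := rfl
  mul_smul _ _ _ := rfl

theorem Aut.smul_hom (a : Aut X) (f : Hom X Y) : a • f = f.comp a⁻¹.toHom := rfl

theorem setOf_exists_comp_eq_orbit (Γ : Subgroup (Aut X)) (f : Hom X Y) :
    {f' | ∃ γ : Γ, f' = f.comp (γ : Aut X).toHom} = MulAction.orbit Γ f := by
  ext f'
  constructor
  · rintro ⟨γ, rfl⟩
    exact ⟨γ⁻¹, by simp only [Subgroup.smul_def, Aut.smul_hom, InvMemClass.coe_inv, inv_inv]⟩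
  · rintro ⟨γ, rfl⟩
    exact ⟨γ⁻¹, rfl⟩

section Quotient

variable (Γ : Subgroup (Aut X)) (hni : ∀ (γ : ↥Γ) (e : X.E), (γ : Aut X) • e ≠ X.bar e)

theorem isCovering_quotHom [IsCancelSMul Γ X.V] : (quotHom X Γ hni).IsCovering := by
  intro v
  refine ⟨fun e he => congrArg (Quotient.mk _) he, fun e he e' he' hee => ?_, ?_⟩
  · obtain ⟨γ, hγ⟩ := Quotient.exact hee
    change (γ : Aut X) • e' = e at hγ
    have hfix : γ • X.init e' = X.init e' := by
      change (γ : Aut X) • X.init e' = X.init e'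
      rw [← Aut.init_smul, hγ, he, he']
    rw [← hγ, ← Subgroup.smul_def, IsCancelSMul.eq_one_of_smul hfix, one_smul]
  · rintro ⟨e⟩ he
    obtain ⟨γ, hγ⟩ := Quotient.exact he
    change (γ : Aut X) • v = X.init e at hγ
    refine ⟨(γ⁻¹ : Aut X) • e, ?_, Quotient.sound ⟨γ⁻¹, rfl⟩⟩
    change X.init ((γ⁻¹ : Aut X) • e) = v
    rw [Aut.init_smul, ← hγ, inv_smul_smul]

theorem quotHom_comp_of_mem {c : Aut X} (hc : c ∈ Γ) :
    (quotHom X Γ hni).comp c.toHom = quotHom X Γ hni :=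
  Hom.ext (funext fun _ => Quotient.sound ⟨⟨c, hc⟩, rfl⟩)
    (funext fun _ => Quotient.sound ⟨⟨c, hc⟩, rfl⟩)

theorem quotHom_comp_eq_self_iff (ht : X.IsTreeS) [IsCancelSMul Γ X.V] (c : Aut X) :
    (quotHom X Γ hni).comp c.toHom = quotHom X Γ hni ↔ c ∈ Γ := by
  refine ⟨fun h => ?_, quotHom_comp_of_mem Γ hni⟩
  obtain ⟨x₀⟩ := ht.1
  obtain ⟨γ, hγ⟩ := Quotient.exact (congrFun (congrArg Hom.fV h) x₀)
  suffices c = γ from this ▸ γ.2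
  refine Aut.toHom_injective ((isCovering_quotHom Γ hni).eq_of_comp_eq ht.2.1 ?_ hγ.symm)
  rw [h, quotHom_comp_of_mem Γ hni γ.2]

theorem quotHom_comp_eq_iff (ht : X.IsTreeS) [IsCancelSMul Γ X.V] (a b : Aut X) :
    (quotHom X Γ hni).comp a.toHom = (quotHom X Γ hni).comp b.toHom ↔ b * a⁻¹ ∈ Γ := by
  rw [Hom.comp_toHom_eq_iff, quotHom_comp_eq_self_iff Γ hni ht]

theorem stabilizer_quotHom_comp (ht : X.IsTreeS) [IsCancelSMul Γ X.V] (g : Aut X) :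
    MulAction.stabilizer Γ ((quotHom X Γ hni).comp g.toHom) =
      (conjSubgroup g Γ).subgroupOf Γ := by
  ext γ
  rw [MulAction.mem_stabilizer_iff, Subgroup.mem_subgroupOf, mem_conjSubgroup, Subgroup.smul_def,
    Aut.smul_hom, Hom.comp_assoc, ← Aut.mul_toHom, quotHom_comp_eq_iff Γ hni ht, mul_inv_rev,
    inv_inv, mul_assoc]

theorem card_orbit_quotHom_comp (ht : X.IsTreeS) [IsCancelSMul Γ X.V] (g : Aut X) :
    Nat.card (MulAction.orbit Γ ((quotHom X Γ hni).comp g.toHom)) =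
      (conjSubgroup g Γ).relIndex Γ := by
  rw [Nat.card_coe_set_eq, ← MulAction.index_stabilizer, stabilizer_quotHom_comp Γ hni ht]
  rfl

end Quotient

end SGraph

open SGraph

theorem tree_commN_equiv_coverings_orbit_general (X : SGraph) (htree : X.IsTreeS)
    (Γ : Subgroup (Aut X))
    (hfree : ∀ (γ : ↥Γ) (v : X.V), (γ : Aut X) • v = v → γ = 1)
    (hni : ∀ (γ : ↥Γ) (e : X.E), (γ : Aut X) • e ≠ X.bar e)
    (hquotV : Finite (Quotient (MulAction.orbitRel ↥Γ X.V))) :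
    (∀ g : Aut X, ((quotHom X Γ hni).comp g.toHom).IsCovering) ∧
    (∀ f : Hom X (quotSG X Γ hni), f.IsCovering →
        ∃ g : Aut X, f = (quotHom X Γ hni).comp g.toHom) ∧
    (∀ g g' : Aut X,
        (quotHom X Γ hni).comp g.toHom = (quotHom X Γ hni).comp g'.toHom ↔
          ∃ γ ∈ Γ, g' = γ * g) ∧
    (∀ n : ℕ, 1 ≤ n → ∀ g : Aut X,
        g ∈ commSet Γ n ↔
          Nat.card
            ↥{f : Hom X (quotSG X Γ hni) |
              ∃ γ : ↥Γ, f = ((quotHom X Γ hni).comp g.toHom).comp (γ : Aut X).toHom} =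
            n) := by
  have : IsCancelSMul Γ X.V := isCancelSMul_iff_eq_one_of_smul_eq.mpr hfree
  have hπ := isCovering_quotHom Γ hni
  have : Nonempty X.V := htree.1
  refine ⟨fun g => hπ.comp g.isCovering_toHom, fun f hf => ?_, fun g g' => ?_, fun n hn g => ?_⟩
  · obtain ⟨g, hg, -⟩ := htree.exists_aut_comp_eq hπ hf
      (Quotient.out_eq (f.fV (Classical.arbitrary X.V)))
    exact ⟨g, hg.symm⟩
  · rw [quotHom_comp_eq_iff Γ hni htree]
    exact ⟨fun h => ⟨_, h, (inv_mul_cancel_right g' g).symm⟩, by rintro ⟨γ, hγ, rfl⟩; simpa⟩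
  · rw [setOf_exists_comp_eq_orbit, card_orbit_quotHom_comp Γ hni htree]
    exact mem_commSet_iff_of_finite_orbitRel_quotient (α := X.V) (Nat.one_le_iff_ne_zero.mp hn) g

/-- **Lemma.** Let `T` be a uniform tree (in the sense of Serre), `G = Aut(T)`,
`Γ ⊆ G` a torsion-free uniform lattice (a subgroup acting freely and without inversions
with finite quotient graph), `Y = Γ\T`, and `π : T → Y` the canonical projection. The
group `Γ` acts on the set of covering maps `T → Y` by precomposition. Then the bijection
`Γg ↦ π ∘ g` between `Γ\G` and the covering maps `T → Y` restricts, for every `n ≥ 1`,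
to a bijection between `Γ\Comm_n(Γ, G)` and the set of coverings whose `Γ`-orbit has
size exactly `n`; explicitly (the bijectivity on all of `Γ\G` being part of the
statement), `g ∈ Comm_n(Γ, G)` if and only if the `Γ`-orbit of `π ∘ g` has exactly `n`
elements. -/
theorem tree_commN_equiv_coverings_orbit (X : SGraph) (htree : X.IsTreeS)
    (hlf : X.LocallyFiniteS) (Γ : Subgroup (Aut X))
    (hfree : ∀ (γ : ↥Γ) (v : X.V), (γ : Aut X) • v = v → γ = 1)
    (hni : ∀ (γ : ↥Γ) (e : X.E), (γ : Aut X) • e ≠ X.bar e)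
    (hquotV : Finite (Quotient (MulAction.orbitRel ↥Γ X.V)))
    (hquotE : Finite (Quotient (MulAction.orbitRel ↥Γ X.E))) :
    (∀ g : Aut X, ((quotHom X Γ hni).comp g.toHom).IsCovering) ∧
    (∀ f : Hom X (quotSG X Γ hni), f.IsCovering →
        ∃ g : Aut X, f = (quotHom X Γ hni).comp g.toHom) ∧
    (∀ g g' : Aut X,
        (quotHom X Γ hni).comp g.toHom = (quotHom X Γ hni).comp g'.toHom ↔
          ∃ γ ∈ Γ, g' = γ * g) ∧
    (∀ n : ℕ, 1 ≤ n → ∀ g : Aut X,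
        g ∈ commSet Γ n ↔
          Nat.card
            ↥{f : Hom X (quotSG X Γ hni) |
              ∃ γ : ↥Γ, f = ((quotHom X Γ hni).comp g.toHom).comp (γ : Aut X).toHom} =
            n) :=
  tree_commN_equiv_coverings_orbit_general X htree Γ hfree hni hquotV
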